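/- Let g₁,…,g_m and Δg₁,…,Δg_m be N×N complex Hermitian matrices with g̃ⱼ := gⱼ + Δgⱼ, and let α, Δα ∈ ℝ^m with α̃ := α + Δα. Set ε_g := maxⱼ ‖Δgⱼ‖ (spectral norm), ε_α := ‖Δα‖_∞, κ := κ(g), γ := γ(g|α), γ̃ := γ(g̃|α̃). Assume κ > 0 and ε_g < κ. Then |γ̃ − γ| ≤ (ε_g/(κ − ε_g)) · γ + ε_α/(2(κ − ε_g)). -/

import Mathlib

open scoped BigOperators

set_option synthInstance.maxHeartbeats 1000000
set_option maxHeartbeats 1000000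


/-- The spectral norm (ℓ²-operator norm) of a complex matrix. -/
noncomputable def specNorm {n : Type*} [Fintype n] [DecidableEq n]
    (A : Matrix n n ℂ) : ℝ :=
  ‖Matrix.toEuclideanCLM (𝕜 := ℂ) A‖

lemma specNorm_nonneg {n : Type*} [Fintype n] [DecidableEq n] (A : Matrix n n ℂ) :
    0 ≤ specNorm A := norm_nonneg _

lemma specNorm_smul {n : Type*} [Fintype n] [DecidableEq n] (c : ℝ) (A : Matrix n n ℂ) :
    specNorm (c • A) = |c| * specNorm A := by
  have h : c • A = (c : ℂ) • A := by ext i j; simp [Complex.real_smul]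
  unfold specNorm
  rw [h, map_smul]
  have := norm_smul (c : ℂ) (Matrix.toEuclideanCLM (𝕜 := ℂ) A)
  rw [this, Complex.norm_real, Real.norm_eq_abs]

lemma specNorm_add_le {n : Type*} [Fintype n] [DecidableEq n] (A B : Matrix n n ℂ) :
    specNorm (A + B) ≤ specNorm A + specNorm B := by
  unfold specNorm; rw [map_add]; exact norm_add_le _ _

lemma specNorm_sub_le {n : Type*} [Fintype n] [DecidableEq n] (A B : Matrix n n ℂ) :
    specNorm A - specNorm B ≤ specNorm (A + B) := by
  have := specNorm_add_le (A + B) (-B)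
  have hn : specNorm (-B) = specNorm B := by
    unfold specNorm; rw [map_neg, norm_neg]
  simp only [add_neg_cancel_right] at this
  linarith

lemma specNorm_sum_smul_le {N m : ℕ} (y : Fin m → ℝ) (h : Fin m → Matrix (Fin N) (Fin N) ℂ)
    (ε : ℝ) (hε : ∀ j, specNorm (h j) ≤ ε) :
    specNorm (∑ j, y j • h j) ≤ (∑ j, |y j|) * ε := by
  unfold specNorm
  rw [map_sum]
  refine le_trans (norm_sum_le _ _) ?_
  rw [Finset.sum_mul]
  refine Finset.sum_le_sum fun j _ => ?_
  have : ‖Matrix.toEuclideanCLM (𝕜 := ℂ) (y j • h j)‖ = |y j| * specNorm (h j) :=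
    specNorm_smul (y j) (h j)
  rw [this]
  exact mul_le_mul_of_nonneg_left (hε j) (abs_nonneg _)


/-- The conditioning constant `κ(g)`: the infimum over real vectors `y` with `‖y‖₁ = 1` and
real `μ` of the spectral norm `‖Σⱼ yⱼ gⱼ + μ I‖`. -/
noncomputable def kappa {N m : ℕ} (g : Fin m → Matrix (Fin N) (Fin N) ℂ) : ℝ :=
  sInf {c : ℝ | ∃ (y : Fin m → ℝ) (μ : ℝ), (∑ j, |y j|) = 1 ∧
    c = specNorm (∑ j, y j • g j + μ • (1 : Matrix (Fin N) (Fin N) ℂ))}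

/-- The dual value `γ(g|α)`: the supremum of `Σⱼ αⱼ yⱼ` over all `y` for which there exists
`μ` with `‖Σⱼ yⱼ gⱼ + μ I‖ ≤ 1/2` in spectral norm. -/
noncomputable def gammaVal {N m : ℕ} (g : Fin m → Matrix (Fin N) (Fin N) ℂ)
    (α : Fin m → ℝ) : ℝ :=
  sSup {c : ℝ | ∃ (y : Fin m → ℝ) (μ : ℝ),
    specNorm (∑ j, y j • g j + μ • (1 : Matrix (Fin N) (Fin N) ℂ)) ≤ 1 / 2 ∧
    c = ∑ j, α j * y j}

section Aux

variable {N m : ℕ}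

lemma B_smul (t : ℝ) (g : Fin m → Matrix (Fin N) (Fin N) ℂ) (y : Fin m → ℝ) (μ : ℝ) :
    (∑ j, (t * y j) • g j + (t * μ) • (1 : Matrix (Fin N) (Fin N) ℂ)) =
      t • (∑ j, y j • g j + μ • (1 : Matrix (Fin N) (Fin N) ℂ)) := by
  simp only [mul_smul, smul_add, Finset.smul_sum]

lemma B_split (g Δg : Fin m → Matrix (Fin N) (Fin N) ℂ) (y : Fin m → ℝ) (μ : ℝ) :
    (∑ j, y j • (g j + Δg j) + μ • (1 : Matrix (Fin N) (Fin N) ℂ)) =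
      (∑ j, y j • g j + μ • (1 : Matrix (Fin N) (Fin N) ℂ)) + ∑ j, y j • Δg j := by
  simp only [smul_add, Finset.sum_add_distrib]
  abel

lemma kappa_le (g : Fin m → Matrix (Fin N) (Fin N) ℂ) (y : Fin m → ℝ) (μ : ℝ)
    (hy : (∑ j, |y j|) = 1) :
    kappa g ≤ specNorm (∑ j, y j • g j + μ • (1 : Matrix (Fin N) (Fin N) ℂ)) := by
  refine csInf_le ⟨0, ?_⟩ ⟨y, μ, hy, rfl⟩
  rintro c ⟨y', μ', -, rfl⟩
  exact specNorm_nonneg _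

lemma kappa_mul_le (g : Fin m → Matrix (Fin N) (Fin N) ℂ) (y : Fin m → ℝ) (μ : ℝ) :
    kappa g * (∑ j, |y j|) ≤
      specNorm (∑ j, y j • g j + μ • (1 : Matrix (Fin N) (Fin N) ℂ)) := by
  have hs0 : 0 ≤ ∑ j, |y j| := Finset.sum_nonneg fun j _ => abs_nonneg _
  rcases hs0.eq_or_lt with h | h
  · have hy : ∀ j, y j = 0 := by
      intro j
      have := Finset.sum_eq_zero_iff_of_nonneg (fun j _ => abs_nonneg (y j)) |>.1 h.symm
      simpa using abs_eq_zero.mp (this j (Finset.mem_univ j))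
    rw [← h, mul_zero]
    exact specNorm_nonneg _
  · set s := ∑ j, |y j| with hs
    have hinv : 0 < s⁻¹ := inv_pos.2 h
    have hy1 : (∑ j, |s⁻¹ * y j|) = 1 := by
      simp only [abs_mul, abs_of_pos hinv, ← Finset.mul_sum]
      field_simp
      exact hs.symm
    have key := kappa_le g (fun j => s⁻¹ * y j) (s⁻¹ * μ) hy1
    rw [B_smul, specNorm_smul, abs_of_pos hinv] at key
    calc kappa g * s ≤ (s⁻¹ * specNorm (∑ j, y j • g j + μ • (1 : Matrix (Fin N) (Fin N) ℂ))) * s :=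
          mul_le_mul_of_nonneg_right key h.le
      _ = specNorm (∑ j, y j • g j + μ • (1 : Matrix (Fin N) (Fin N) ℂ)) := by
          field_simp
  
lemma zero_mem_S (g : Fin m → Matrix (Fin N) (Fin N) ℂ) (α : Fin m → ℝ) :
    (0 : ℝ) ∈ {c : ℝ | ∃ (y : Fin m → ℝ) (μ : ℝ),
      specNorm (∑ j, y j • g j + μ • (1 : Matrix (Fin N) (Fin N) ℂ)) ≤ 1 / 2 ∧
      c = ∑ j, α j * y j} := by
  refine ⟨(fun _ => (0:ℝ)), 0, ?_, by simp⟩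
  have : (∑ j, (0:ℝ) • g j + (0:ℝ) • (1 : Matrix (Fin N) (Fin N) ℂ)) = 0 := by simp
  rw [this]
  have : specNorm (0 : Matrix (Fin N) (Fin N) ℂ) = 0 := by
    unfold specNorm; rw [map_zero, norm_zero]
  rw [this]; norm_num

lemma bddAbove_S (g : Fin m → Matrix (Fin N) (Fin N) ℂ) (α : Fin m → ℝ) (κ' : ℝ)
    (hκ' : 0 < κ')
    (hb : ∀ (y : Fin m → ℝ) (μ : ℝ),
      specNorm (∑ j, y j • g j + μ • (1 : Matrix (Fin N) (Fin N) ℂ)) ≤ 1 / 2 →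
      (∑ j, |y j|) ≤ 1 / (2 * κ')) :
    BddAbove {c : ℝ | ∃ (y : Fin m → ℝ) (μ : ℝ),
      specNorm (∑ j, y j • g j + μ • (1 : Matrix (Fin N) (Fin N) ℂ)) ≤ 1 / 2 ∧
      c = ∑ j, α j * y j} := by
  refine ⟨(∑ j, |α j|) * (1 / (2 * κ')), ?_⟩
  rintro c ⟨y, μ, hfeas, rfl⟩
  have hs := hb y μ hfeas
  calc (∑ j, α j * y j) ≤ ∑ j, |α j * y j| :=
        Finset.sum_le_sum fun j _ => le_abs_self _
    _ = ∑ j, |α j| * |y j| := by simp [abs_mul]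
    _ ≤ ∑ j, |α j| * (1 / (2 * κ')) := by
        refine Finset.sum_le_sum fun j _ => ?_
        refine mul_le_mul_of_nonneg_left ?_ (abs_nonneg _)
        exact le_trans (Finset.single_le_sum (fun i _ => abs_nonneg (y i)) (Finset.mem_univ j)) hs
    _ = (∑ j, |α j|) * (1 / (2 * κ')) := by rw [Finset.sum_mul]

lemma specNorm_neg {n : Type*} [Fintype n] [DecidableEq n] (A : Matrix n n ℂ) :
    specNorm (-A) = specNorm A := by
  unfold specNorm; rw [map_neg, norm_neg]

lemma feas_bound' {N m : ℕ} (g Δg : Fin m → Matrix (Fin N) (Fin N) ℂ) (εg : ℝ)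
    (hΔb : ∀ j, specNorm (Δg j) ≤ εg) (y : Fin m → ℝ) (μ : ℝ)
    (hf : specNorm (∑ j, y j • (g j + Δg j) + μ • (1 : Matrix (Fin N) (Fin N) ℂ)) ≤ 1 / 2) :
    (kappa g - εg) * (∑ j, |y j|) ≤ 1 / 2 := by
  have h1 := kappa_mul_le g y μ
  have h2 : specNorm (∑ j, y j • g j + μ • (1 : Matrix (Fin N) (Fin N) ℂ))
        - specNorm (∑ j, y j • Δg j)
      ≤ specNorm (∑ j, y j • (g j + Δg j) + μ • (1 : Matrix (Fin N) (Fin N) ℂ)) := by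
    rw [B_split]; exact specNorm_sub_le _ _
  have h3 := specNorm_sum_smul_le y Δg εg hΔb
  nlinarith [h1, h2, h3, hf]

lemma sum_mul_abs_le {m : ℕ} (β y : Fin m → ℝ) (εα : ℝ) (hβ : ∀ j, |β j| ≤ εα) :
    (∑ j, β j * y j) ≤ εα * (∑ j, |y j|) := by
  calc (∑ j, β j * y j) ≤ ∑ j, |β j * y j| := Finset.sum_le_sum fun j _ => le_abs_self _
    _ = ∑ j, |β j| * |y j| := by simp [abs_mul]
    _ ≤ ∑ j, εα * |y j| := Finset.sum_le_sum fun j _ =>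
        mul_le_mul_of_nonneg_right (hβ j) (abs_nonneg _)
    _ = εα * (∑ j, |y j|) := by rw [Finset.mul_sum]

lemma main_le {N m : ℕ} (g Δg : Fin m → Matrix (Fin N) (Fin N) ℂ)
    (α Δα : Fin m → ℝ) (εg εα : ℝ)
    (hΔb : ∀ j, specNorm (Δg j) ≤ εg) (hΔαb : ∀ j, |Δα j| ≤ εα)
    (hκ : 0 < kappa g) (hd0 : 0 < kappa g - εg) (hεg0 : 0 ≤ εg) (hεα0 : 0 ≤ εα) :
    gammaVal (fun j => g j + Δg j) (fun j => α j + Δα j) ≤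
      (kappa g / (kappa g - εg)) * gammaVal g α + εα / (2 * (kappa g - εg)) := by
  have hbddg : BddAbove {c : ℝ | ∃ (y : Fin m → ℝ) (μ : ℝ),
      specNorm (∑ j, y j • g j + μ • (1 : Matrix (Fin N) (Fin N) ℂ)) ≤ 1 / 2 ∧
      c = ∑ j, α j * y j} := by
    refine bddAbove_S g α (kappa g) hκ fun y μ hf => ?_
    have := kappa_mul_le g y μ
    rw [le_div_iff₀ (by positivity)]
    nlinarith
  have hγ0 : 0 ≤ gammaVal g α := le_csSup hbddg (zero_mem_S g α)
  apply csSup_le ⟨0, zero_mem_S _ _⟩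
  rintro c ⟨y, μ, hf, rfl⟩
  have hs0 : 0 ≤ ∑ j, |y j| := Finset.sum_nonneg fun j _ => abs_nonneg _
  have hsb : (kappa g - εg) * (∑ j, |y j|) ≤ 1 / 2 := feas_bound' g Δg εg hΔb y μ hf
  have hD := specNorm_sum_smul_le y Δg εg hΔb
  have hBg : specNorm (∑ j, y j • g j + μ • (1 : Matrix (Fin N) (Fin N) ℂ))
      ≤ 1 / 2 + (∑ j, |y j|) * εg := by
    have heq : (∑ j, y j • g j + μ • (1 : Matrix (Fin N) (Fin N) ℂ))
        = (∑ j, y j • (g j + Δg j) + μ • (1 : Matrix (Fin N) (Fin N) ℂ))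
          + (- ∑ j, y j • Δg j) := by
      rw [B_split]; abel
    rw [heq]
    refine le_trans (specNorm_add_le _ _) ?_
    rw [specNorm_neg]
    linarith
  set t := (kappa g - εg) / kappa g with ht
  have ht0 : 0 < t := div_pos hd0 hκ
  have hfeas2 : specNorm (∑ j, (t * y j) • g j
      + (t * μ) • (1 : Matrix (Fin N) (Fin N) ℂ)) ≤ 1 / 2 := by
    rw [B_smul, specNorm_smul, abs_of_pos ht0]
    have h1 : specNorm (∑ j, y j • g j + μ • (1 : Matrix (Fin N) (Fin N) ℂ))
        ≤ kappa g / (2 * (kappa g - εg)) := by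
      rw [le_div_iff₀ (by positivity)]
      nlinarith [mul_nonneg hεg0 hs0]
    calc t * specNorm (∑ j, y j • g j + μ • (1 : Matrix (Fin N) (Fin N) ℂ))
        ≤ t * (kappa g / (2 * (kappa g - εg))) := mul_le_mul_of_nonneg_left h1 ht0.le
      _ = 1 / 2 := by rw [ht]; field_simp
  have hmem : (∑ j, α j * (t * y j)) ≤ gammaVal g α :=
    le_csSup hbddg ⟨fun j => t * y j, t * μ, hfeas2, rfl⟩
  have hsum : (∑ j, α j * (t * y j)) = t * ∑ j, α j * y j := by
    rw [Finset.mul_sum]; exact Finset.sum_congr rfl fun j _ => by ring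
  have hαy : t * (∑ j, α j * y j) ≤ gammaVal g α := by rw [← hsum]; exact hmem
  have hΔsum : (∑ j, Δα j * y j) ≤ εα * (∑ j, |y j|) := sum_mul_abs_le Δα y εα hΔαb
  have hsplit : (∑ j, (α j + Δα j) * y j) = (∑ j, α j * y j) + ∑ j, Δα j * y j := by
    rw [← Finset.sum_add_distrib]; exact Finset.sum_congr rfl fun j _ => by ring
  rw [hsplit]
  have hαy2 : (∑ j, α j * y j) ≤ (kappa g / (kappa g - εg)) * gammaVal g α := by
    have h2 : (∑ j, α j * y j) ≤ gammaVal g α / t :=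
      (le_div_iff₀ ht0).2 (by rw [mul_comm]; exact hαy)
    have h3 : gammaVal g α / t = (kappa g / (kappa g - εg)) * gammaVal g α := by
      rw [ht]; field_simp
    linarith
  have h4 : εα * (∑ j, |y j|) ≤ εα / (2 * (kappa g - εg)) := by
    rw [le_div_iff₀ (by positivity)]
    nlinarith
  linarith

lemma main_ge {N m : ℕ} (g Δg : Fin m → Matrix (Fin N) (Fin N) ℂ)
    (α Δα : Fin m → ℝ) (εg εα : ℝ)
    (hΔb : ∀ j, specNorm (Δg j) ≤ εg) (hΔαb : ∀ j, |Δα j| ≤ εα)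
    (hκ : 0 < kappa g) (hd0 : 0 < kappa g - εg) (hεg0 : 0 ≤ εg) (hεα0 : 0 ≤ εα) :
    gammaVal g α ≤
      ((kappa g + εg) / kappa g) * gammaVal (fun j => g j + Δg j) (fun j => α j + Δα j)
        + εα / (2 * kappa g) := by
  have hbddg' : BddAbove {c : ℝ | ∃ (y : Fin m → ℝ) (μ : ℝ),
      specNorm (∑ j, y j • (g j + Δg j) + μ • (1 : Matrix (Fin N) (Fin N) ℂ)) ≤ 1 / 2 ∧
      c = ∑ j, (α j + Δα j) * y j} := by
    refine bddAbove_S _ _ (kappa g - εg) hd0 fun y μ hf => ?_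
    have := feas_bound' g Δg εg hΔb y μ hf
    rw [le_div_iff₀ (by positivity)]
    nlinarith
  apply csSup_le ⟨0, zero_mem_S _ _⟩
  rintro c ⟨y, μ, hf, rfl⟩
  have hs0 : 0 ≤ ∑ j, |y j| := Finset.sum_nonneg fun j _ => abs_nonneg _
  have hsb : kappa g * (∑ j, |y j|) ≤ 1 / 2 :=
    le_trans (kappa_mul_le g y μ) hf
  have hD := specNorm_sum_smul_le y Δg εg hΔb
  have hBg : specNorm (∑ j, y j • (g j + Δg j) + μ • (1 : Matrix (Fin N) (Fin N) ℂ))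
      ≤ 1 / 2 + (∑ j, |y j|) * εg := by
    rw [B_split]
    refine le_trans (specNorm_add_le _ _) ?_
    linarith
  set t := kappa g / (kappa g + εg) with ht
  have hκε : 0 < kappa g + εg := by linarith
  have ht0 : 0 < t := div_pos hκ hκε
  have hfeas2 : specNorm (∑ j, (t * y j) • (g j + Δg j)
      + (t * μ) • (1 : Matrix (Fin N) (Fin N) ℂ)) ≤ 1 / 2 := by
    rw [B_smul, specNorm_smul, abs_of_pos ht0]
    have h1 : specNorm (∑ j, y j • (g j + Δg j) + μ • (1 : Matrix (Fin N) (Fin N) ℂ))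
        ≤ (kappa g + εg) / (2 * kappa g) := by
      rw [le_div_iff₀ (by positivity)]
      nlinarith [mul_nonneg hεg0 hs0]
    calc t * specNorm (∑ j, y j • (g j + Δg j) + μ • (1 : Matrix (Fin N) (Fin N) ℂ))
        ≤ t * ((kappa g + εg) / (2 * kappa g)) := mul_le_mul_of_nonneg_left h1 ht0.le
      _ = 1 / 2 := by rw [ht]; field_simp
  have hmem : (∑ j, (α j + Δα j) * (t * y j))
      ≤ gammaVal (fun j => g j + Δg j) (fun j => α j + Δα j) :=
    le_csSup hbddg' ⟨fun j => t * y j, t * μ, hfeas2, rfl⟩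
  have hsum : (∑ j, (α j + Δα j) * (t * y j)) = t * ∑ j, (α j + Δα j) * y j := by
    rw [Finset.mul_sum]; exact Finset.sum_congr rfl fun j _ => by ring
  have hαy : t * (∑ j, (α j + Δα j) * y j)
      ≤ gammaVal (fun j => g j + Δg j) (fun j => α j + Δα j) := by
    rw [← hsum]; exact hmem
  have hΔsum : (∑ j, (-Δα j) * y j) ≤ εα * (∑ j, |y j|) :=
    sum_mul_abs_le (fun j => -Δα j) y εα (fun j => by rw [abs_neg]; exact hΔαb j)
  have hsplit : (∑ j, α j * y j) = (∑ j, (α j + Δα j) * y j) + ∑ j, (-Δα j) * y j := by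
    rw [← Finset.sum_add_distrib]; exact Finset.sum_congr rfl fun j _ => by ring
  rw [hsplit]
  have hαy2 : (∑ j, (α j + Δα j) * y j) ≤ ((kappa g + εg) / kappa g)
      * gammaVal (fun j => g j + Δg j) (fun j => α j + Δα j) := by
    have h2 : (∑ j, (α j + Δα j) * y j)
        ≤ gammaVal (fun j => g j + Δg j) (fun j => α j + Δα j) / t :=
      (le_div_iff₀ ht0).2 (by rw [mul_comm]; exact hαy)
    have h3 : gammaVal (fun j => g j + Δg j) (fun j => α j + Δα j) / t
        = ((kappa g + εg) / kappa g)
          * gammaVal (fun j => g j + Δg j) (fun j => α j + Δα j) := by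
      rw [ht]; field_simp
    linarith
  have h4 : εα * (∑ j, |y j|) ≤ εα / (2 * kappa g) := by
    rw [le_div_iff₀ (by positivity)]
    nlinarith
  linarith


/-- Error scaling of γ: `|γ̃ − γ| ≤ (ε_g/(κ − ε_g)) γ + ε_α/(2(κ − ε_g))` when `ε_g < κ`. -/
theorem gamma_perturb_abs {N m : ℕ} (hm : 0 < m)
    (g Δg : Fin m → Matrix (Fin N) (Fin N) ℂ)
    (hg : ∀ j, (g j).IsHermitian) (hΔg : ∀ j, (Δg j).IsHermitian)
    (α Δα : Fin m → ℝ) (εg εα : ℝ)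
    (hεg : εg = Finset.univ.sup' (Finset.univ_nonempty_iff.mpr (Fin.pos_iff_nonempty.mp hm))
      (fun j => specNorm (Δg j)))
    (hεα : εα = Finset.univ.sup' (Finset.univ_nonempty_iff.mpr (Fin.pos_iff_nonempty.mp hm))
      (fun j => |Δα j|))
    (hκ : 0 < kappa g) (hlt : εg < kappa g) :
    |gammaVal (fun j => g j + Δg j) (fun j => α j + Δα j) - gammaVal g α| ≤
      (εg / (kappa g - εg)) * gammaVal g α + εα / (2 * (kappa g - εg)) := by
  have hd0 : 0 < kappa g - εg := sub_pos.2 hlt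
  have hΔb : ∀ j, specNorm (Δg j) ≤ εg := fun j => by
    rw [hεg]; exact Finset.le_sup' (fun j => specNorm (Δg j)) (Finset.mem_univ j)
  have hΔαb : ∀ j, |Δα j| ≤ εα := fun j => by
    rw [hεα]; exact Finset.le_sup' (fun j => |Δα j|) (Finset.mem_univ j)
  have hεg0 : 0 ≤ εg := le_trans (specNorm_nonneg (Δg ⟨0, hm⟩)) (hΔb ⟨0, hm⟩)
  have hεα0 : 0 ≤ εα := le_trans (abs_nonneg (Δα ⟨0, hm⟩)) (hΔαb ⟨0, hm⟩)
  have P1 := main_le g Δg α Δα εg εα hΔb hΔαb hκ hd0 hεg0 hεα0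
  have P2 := main_ge g Δg α Δα εg εα hΔb hΔαb hκ hd0 hεg0 hεα0
  set γ := gammaVal g α with hγ
  set γ' := gammaVal (fun j => g j + Δg j) (fun j => α j + Δα j) with hγ'
  have hγ0 : 0 ≤ γ := by
    rw [hγ]
    refine le_csSup ?_ (zero_mem_S g α)
    refine bddAbove_S g α (kappa g) hκ fun y μ hf => ?_
    have := kappa_mul_le g y μ
    rw [le_div_iff₀ (by positivity)]
    nlinarith
  rw [abs_sub_le_iff]
  constructor
  · have e1 : kappa g / (kappa g - εg) * γ = γ + εg / (kappa g - εg) * γ := by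
      field_simp
      ring
    linarith
  · have e1 : (kappa g + εg) / kappa g * γ' = γ' + εg / kappa g * γ' := by
      field_simp
    have e2 : εg / kappa g * γ' ≤ εg / kappa g
        * (kappa g / (kappa g - εg) * γ + εα / (2 * (kappa g - εg))) :=
      mul_le_mul_of_nonneg_left P1 (by positivity)
    have e3 : εg / kappa g * (kappa g / (kappa g - εg) * γ + εα / (2 * (kappa g - εg)))
        + εα / (2 * kappa g) = εg / (kappa g - εg) * γ + εα / (2 * (kappa g - εg)) := by
      field_simp
      ring
    linarith
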